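/- The new sixth-order α-damping scheme with α = 38/15, β = −11/228 equals the combination D₁(u_{j+1}−2u_j+u_{j−1})/Δx² + D₂(u_{j+2}−2u_j+u_{j−2})/(2Δx)² + D₃(u_{j+3}−2u_j+u_{j−3})/(3Δx)² with D₁ = 3/2, D₂ = −3/5, D₃ = 1/10; equivalently its Fourier symbol is F(t) = −6 sin²(t/2) + (3/5) sin²(t) − (2/45) sin²(3t/2). -/

import Mathlib

open Real

/-- Fourth-order central-difference cell-center gradient applied to a sequence. -/
noncomputable def grad4U (Δx : ℝ) (u : ℤ → ℂ) (m : ℤ) : ℂ :=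
  (8 * (u (m+1) - u (m-1)) - (u (m+2) - u (m-2))) / (12 * (Δx : ℂ))

/-- Left quadratic reconstruction at face `j+1/2`. -/
noncomputable def uLrecU (β Δx : ℝ) (u : ℤ → ℂ) (j : ℤ) : ℂ :=
  u j + grad4U Δx u j * Δx / 2 + (β : ℂ) * (u (j+1) - 2 * u j + u (j-1))

/-- Right quadratic reconstruction at face `j+1/2`. -/
noncomputable def uRrecU (β Δx : ℝ) (u : ℤ → ℂ) (j : ℤ) : ℂ :=
  u (j+1) - grad4U Δx u (j+1) * Δx / 2 + (β : ℂ) * (u (j+2) - 2 * u (j+1) + u j)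

/-- α-damping interface gradient (numerical flux) at face `j+1/2`. -/
noncomputable def dampFluxU (α β Δx : ℝ) (u : ℤ → ℂ) (j : ℤ) : ℂ :=
  (grad4U Δx u j + grad4U Δx u (j+1)) / 2
    + ((α / (2 * Δx) : ℝ) : ℂ) * (uRrecU β Δx u j - uLrecU β Δx u j)

/-- The α-damping conservative approximation of the second derivative at cell `j`. -/
noncomputable def dampSchemeU (α β Δx : ℝ) (u : ℤ → ℂ) (j : ℤ) : ℂ :=
  (dampFluxU α β Δx u j - dampFluxU α β Δx u (j-1)) / Δx

set_option maxHeartbeats 2000000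

theorem dampStencilAux (Δx : ℝ) (h : Δx ≠ 0) (u : ℤ → ℂ) (j : ℤ) :
      dampSchemeU (38/15) (-11/228) Δx u j
        = (3/2 : ℂ) * (u (j+1) - 2 * u j + u (j-1)) / ((Δx : ℂ)^2)
          + (-3/5 : ℂ) * (u (j+2) - 2 * u j + u (j-2)) / ((2 * (Δx : ℂ))^2)
          + (1/10 : ℂ) * (u (j+3) - 2 * u j + u (j-3)) / ((3 * (Δx : ℂ))^2) := by
  have hΔ : (Δx : ℂ) ≠ 0 := by exact_mod_cast h
  simp only [dampSchemeU, dampFluxU, uRrecU, uLrecU, grad4U]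
  have e1 : j - 1 + 1 = j := by ring
  have e2 : j + 1 + 1 = j + 2 := by ring
  have e3 : j + 1 - 1 = j := by ring
  have e4 : j + 1 + 2 = j + 3 := by ring
  have e5 : j + 1 - 2 = j - 1 := by ring
  have e6 : j - 1 - 1 = j - 2 := by ring
  have e7 : j - 1 + 2 = j + 1 := by ring
  have e8 : j - 1 - 2 = j - 3 := by ring
  rw [e1, e2, e3, e4, e5, e6, e7, e8]
  push_cast
  field_simp
  ring_nf

theorem dampFourierAux (k Δx : ℝ) (hΔx : Δx ≠ 0) (j : ℤ) :
        dampSchemeU (38/15) (-11/228) Δx (fun m => Complex.exp (Complex.I * k * (m * Δx))) j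
          = (((-6 * Real.sin (k*Δx/2)^2 + (3/5) * Real.sin (k*Δx)^2
                - (2/45) * Real.sin (3*(k*Δx)/2)^2 : ℝ)) : ℂ) / ((Δx : ℂ)^2)
              * Complex.exp (Complex.I * k * (j * Δx)) := by
  have hΔ : (Δx : ℂ) ≠ 0 := by exact_mod_cast hΔx
  rw [dampStencilAux Δx hΔx _ j]
  set θ : ℝ := k * Δx with hθ
  set w : ℂ := Complex.exp (Complex.I * θ) with hw
  set E : ℂ := Complex.exp (Complex.I * k * (j * Δx)) with hE
  have hw0 : w ≠ 0 := Complex.exp_ne_zero _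
  have hE0 : E ≠ 0 := Complex.exp_ne_zero _
  have hp : ∀ n : ℤ, Complex.exp (Complex.I * k * (((j + n : ℤ) : ℂ) * Δx)) = E * w ^ n := by
    intro n
    rw [hE, hw, show Complex.I * k * (((j + n : ℤ) : ℂ) * Δx)
        = Complex.I * k * (j * Δx) + (n : ℂ) * (Complex.I * (θ : ℂ)) by push_cast [hθ]; ring,
      Complex.exp_add, Complex.exp_int_mul]
  have hm : ∀ n : ℤ, Complex.exp (Complex.I * k * (((j - n : ℤ) : ℂ) * Δx)) = E * (w ^ n)⁻¹ := by
    intro n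
    have := hp (-n)
    rw [show j + (-n) = j - n by ring] at this
    rw [this, zpow_neg]
  have hs : ∀ x : ℝ, Real.sin x ^ 2 = (1 - Real.cos (2 * x)) / 2 := by
    intro x
    have h1 := Real.cos_two_mul x
    have h2 := Real.sin_sq_add_cos_sq x
    linarith
  have s1 : Real.sin (θ / 2) ^ 2 = (1 - Real.cos θ) / 2 := by
    rw [hs, show 2 * (θ / 2) = θ by ring]
  have s2 : Real.sin θ ^ 2 = (1 - Real.cos (2 * θ)) / 2 := hs θ
  have s3 : Real.sin (3 * θ / 2) ^ 2 = (1 - Real.cos (3 * θ)) / 2 := by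
    rw [hs, show 2 * (3 * θ / 2) = 3 * θ by ring]
  have CE : ∀ z : ℂ, Complex.cos z
      = (Complex.exp (Complex.I * z) + (Complex.exp (Complex.I * z))⁻¹) / 2 := by
    intro z
    rw [Complex.cos, show -z * Complex.I = -(z * Complex.I) by ring, Complex.exp_neg,
      mul_comm z Complex.I]
  have C1 : Complex.cos (θ : ℂ) = (w + w⁻¹) / 2 := by rw [CE, ← hw]
  have C2 : Complex.cos (2 * (θ : ℂ)) = (w ^ 2 + (w ^ 2)⁻¹) / 2 := by
    rw [CE, show Complex.I * (2 * (θ : ℂ)) = Complex.I * θ + Complex.I * θ by ring,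
      Complex.exp_add, ← hw, sq]
  have C3 : Complex.cos (3 * (θ : ℂ)) = (w ^ 3 + (w ^ 3)⁻¹) / 2 := by
    rw [CE, show Complex.I * (3 * (θ : ℂ))
        = Complex.I * θ + (Complex.I * θ + Complex.I * θ) by ring,
      Complex.exp_add, Complex.exp_add, ← hw]
    ring
  rw [s1, s2, s3]
  have u1 := hp 1
  have u2 := hp 2
  have u3 := hp 3
  have v1 := hm 1
  have v2 := hm 2
  have v3 := hm 3
  simp only [zpow_one, show ((2:ℤ)) = ((2:ℕ):ℤ) from rfl, show ((3:ℤ)) = ((3:ℕ):ℤ) from rfl,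
    zpow_natCast] at u1 u2 u3 v1 v2 v3
  push_cast at u1 u2 u3 v1 v2 v3 ⊢
  rw [u1, u2, u3, v1, v2, v3, C1, C2, C3]
  ring

/-- with `α = 38/15`, `β = −11/228`, the α-damping scheme equals the
three-term stencil with `D₁ = 3/2`, `D₂ = −3/5`, `D₃ = 1/10`, and its Fourier symbol
is `−6 sin²(t/2) + (3/5) sin²t − (2/45) sin²(3t/2)`. -/
theorem dampScheme_stencil_representation :
    (∀ (Δx : ℝ), Δx ≠ 0 → ∀ (u : ℤ → ℂ) (j : ℤ),
      dampSchemeU (38/15) (-11/228) Δx u j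
        = (3/2 : ℂ) * (u (j+1) - 2 * u j + u (j-1)) / ((Δx : ℂ)^2)
          + (-3/5 : ℂ) * (u (j+2) - 2 * u j + u (j-2)) / ((2 * (Δx : ℂ))^2)
          + (1/10 : ℂ) * (u (j+3) - 2 * u j + u (j-3)) / ((3 * (Δx : ℂ))^2))
    ∧ (∀ (k Δx : ℝ), Δx ≠ 0 → ∀ j : ℤ,
        dampSchemeU (38/15) (-11/228) Δx (fun m => Complex.exp (Complex.I * k * (m * Δx))) j
          = (((-6 * Real.sin (k*Δx/2)^2 + (3/5) * Real.sin (k*Δx)^2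
                - (2/45) * Real.sin (3*(k*Δx)/2)^2 : ℝ)) : ℂ) / ((Δx : ℂ)^2)
              * Complex.exp (Complex.I * k * (j * Δx))) :=
  ⟨fun Δx h u j => dampStencilAux Δx h u j, fun k Δx h j => dampFourierAux k Δx h j⟩
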